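/- Let P_X be a distribution on 𝒳 = {1,…,k} with k ≥ 2 and P_X(i) > 0 for all i, and fix ε with 0 < ε < −log(1 − min_i P_X(i)). Define the PML-extremal mechanism P*_{Y|X} on 𝒴 = 𝒳 by P*_{Y|X=i}(j) = 1 − e^ε(1 − P_X(i)) if i = j, and P*_{Y|X=i}(j) = e^ε P_X(j) if i ≠ j. Then for all δ ∈ (0,1), the PML envelope of the joint distribution induced by P_X and P*_{Y|X} satisfies ε_c(δ) = ε. -/

import Mathlib

open Real Finset
open scoped Classical

noncomputable section

/-- Marginal distribution of the first coordinate of a joint distribution. -/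
def margX {X Y : Type} [Fintype Y] (P : X → Y → ℝ) (x : X) : ℝ := ∑ y, P x y

/-- Marginal distribution of the second coordinate of a joint distribution. -/
def margY {X Y : Type} [Fintype X] (P : X → Y → ℝ) (y : Y) : ℝ := ∑ x, P x y

/-- `P` is a joint probability distribution on `X × Y`. -/
def IsJoint {X Y : Type} [Fintype X] [Fintype Y] (P : X → Y → ℝ) : Prop :=
  (∀ x y, 0 ≤ P x y) ∧ (∑ x, ∑ y, P x y) = 1

/-- Conditional probability `P_{Y|X=x}(y)` of the second coordinate given the first. -/
def condYX {X Y : Type} [Fintype Y] (P : X → Y → ℝ) (x : X) (y : Y) : ℝ :=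
  P x y / margX P x

/-- Pointwise maximal leakage of the outcome `y`:
`ℓ(X → y) = log (max_x P_{Y|X=x}(y) / P_Y(y))`. -/
def pml {X Y : Type} [Fintype X] [Fintype Y] (P : X → Y → ℝ) (y : Y) : ℝ :=
  Real.log ((⨆ x, condYX P x y) / margY P y)

/-- `K` is a Markov kernel (a conditional distribution). -/
def IsKernel {Y Z : Type} [Fintype Z] (K : Y → Z → ℝ) : Prop :=
  (∀ y z, 0 ≤ K y z) ∧ ∀ y, (∑ z, K y z) = 1

/-- Joint distribution of `(X, Z)` obtained by post-processing `Y` with the kernel `K`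
(marginalizing out `Y`); this encodes the Markov chain `X - Y - Z`. -/
def pushKernel {X Y Z : Type} [Fintype Y] (P : X → Y → ℝ) (K : Y → Z → ℝ)
    (x : X) (z : Z) : ℝ :=
  ∑ y, P x y * K y z

/-- Left-continuous quantile of the leakage random variable:
`ubar ε_Z(δ) = inf {t ≥ 0 : ℙ(ℓ(Z) ≤ t) ≥ 1 - δ}`. -/
def ubarEps {X Z : Type} [Fintype X] [Fintype Z] (Q : X → Z → ℝ) (δ : ℝ) : ℝ :=
  sInf {t : ℝ | 0 ≤ t ∧
    1 - δ ≤ ∑ z ∈ Finset.univ.filter (fun z => pml Q z ≤ t), margY Q z}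

/-- The PML envelope: the supremum of the left-continuous leakage quantile over all
finite post-processings `Z` of `Y` (i.e., over all Markov chains `X - Y - Z`). -/
def pmlEnvelope {X Y : Type} [Fintype X] [Fintype Y] (P : X → Y → ℝ) (δ : ℝ) : ℝ :=
  sSup {e : ℝ | ∃ (n : ℕ) (K : Y → Fin n → ℝ),
    IsKernel K ∧ e = ubarEps (pushKernel P K) δ}

/-! The extremal joint distribution has both marginals equal to `P_X` and satisfies
`P(i, j) ≤ e^ε P_X(i) P_Y(j)`, with equality whenever `i ≠ j`. Such a bound caps the leakage of
every outcome at `ε` and survives any post-processing `Y → Z`, so the envelope is at most `ε`;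
equality off the diagonal makes every outcome of `Y` itself leak exactly `ε`, so relabelling `Y`
as `Z` attains it. -/

theorem isKernel_equiv {Y Z : Type} [Fintype Z] (e : Y ≃ Z) :
    IsKernel (fun y z => if e y = z then (1 : ℝ) else 0) :=
  ⟨fun y z => by dsimp only; split_ifs <;> norm_num, fun y => by simp⟩

section PushKernel

variable {X Y Z : Type} [Fintype Y] {P : X → Y → ℝ} {K : Y → Z → ℝ}

theorem IsJoint.sum_margY [Fintype X] (hP : IsJoint P) : ∑ y, margY P y = 1 := by
  rw [← hP.2]
  exact sum_comm

theorem margX_pushKernel [Fintype Z] (hK : IsKernel K) (x : X) :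
    margX (pushKernel P K) x = margX P x := by
  simp only [margX, pushKernel]
  rw [sum_comm]
  exact sum_congr rfl fun y _ => by rw [← mul_sum, hK.2 y, mul_one]

theorem margY_pushKernel [Fintype X] (z : Z) :
    margY (pushKernel P K) z = ∑ y, margY P y * K y z := by
  simp only [margY, pushKernel, sum_mul]
  exact sum_comm

theorem isJoint_pushKernel [Fintype X] [Fintype Z] (hP : IsJoint P) (hK : IsKernel K) :
    IsJoint (pushKernel P K) := by
  refine ⟨fun x z => sum_nonneg fun y _ => mul_nonneg (hP.1 x y) (hK.1 y z), ?_⟩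
  calc ∑ x, ∑ z, pushKernel P K x z = ∑ x, margX (pushKernel P K) x := rfl
    _ = ∑ x, margX P x := by simp only [margX_pushKernel hK]
    _ = 1 := hP.2

theorem pushKernel_le_mul_marg [Fintype X] [Fintype Z] {c : ℝ} (hK : IsKernel K)
    (hbound : ∀ x y, P x y ≤ c * margX P x * margY P y) (x : X) (z : Z) :
    pushKernel P K x z ≤ c * margX (pushKernel P K) x * margY (pushKernel P K) z := by
  rw [margX_pushKernel hK, margY_pushKernel, mul_sum]
  refine sum_le_sum fun y _ => ?_
  rw [← mul_assoc]
  exact mul_le_mul_of_nonneg_right (hbound x y) (hK.1 y z)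

theorem pushKernel_equiv (e : Y ≃ Z) :
    pushKernel P (fun y z => if e y = z then (1 : ℝ) else 0) = fun x z => P x (e.symm z) := by
  funext x z
  simp [pushKernel, ← Equiv.eq_symm_apply]

theorem pml_comp_equiv_symm [Fintype X] [Fintype Z] (e : Y ≃ Z) (z : Z) :
    pml (fun x z => P x (e.symm z)) z = pml P (e.symm z) := by
  have hmargX : ∀ x, margX (fun x z => P x (e.symm z)) x = margX P x :=
    fun x => e.symm.sum_comp (P x)
  simp only [pml, condYX, hmargX]
  rfl

end PushKernel

section Leakage

variable {X Y : Type} [Fintype X] [Fintype Y] {P : X → Y → ℝ} {c : ℝ}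

theorem iSup_condYX_le (hP : ∀ x y, 0 ≤ P x y) (hc : 0 ≤ c) {y : Y}
    (hbound : ∀ x, P x y ≤ c * margX P x * margY P y) :
    ⨆ x, condYX P x y ≤ c * margY P y := by
  have hmargY : 0 ≤ margY P y := sum_nonneg fun x _ => hP x y
  refine Real.iSup_le (fun x => ?_) (mul_nonneg hc hmargY)
  refine div_le_of_le_mul₀ (sum_nonneg fun y _ => hP x y) (mul_nonneg hc hmargY) ?_
  linarith [hbound x]

theorem pml_le_log_of_le_mul_marg (hP : ∀ x y, 0 ≤ P x y) (hc : 1 ≤ c) {y : Y}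
    (hbound : ∀ x, P x y ≤ c * margX P x * margY P y) :
    pml P y ≤ Real.log c := by
  have hmargY : 0 ≤ margY P y := sum_nonneg fun x _ => hP x y
  have hS : 0 ≤ ⨆ x, condYX P x y :=
    Real.iSup_nonneg fun x => div_nonneg (hP x y) (sum_nonneg fun y _ => hP x y)
  have hratio : (⨆ x, condYX P x y) / margY P y ≤ c :=
    div_le_of_le_mul₀ hmargY (by linarith) (iSup_condYX_le hP (by linarith) hbound)
  rw [pml]
  rcases (div_nonneg hS hmargY).eq_or_lt with h0 | hpos
  · rw [← h0, Real.log_zero]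
    exact Real.log_nonneg hc
  · exact Real.log_le_log hpos hratio

theorem pml_eq_log_of_le_mul_marg (hP : ∀ x y, 0 ≤ P x y) (hc : 0 ≤ c) {x : X} {y : Y}
    (hbound : ∀ x', P x' y ≤ c * margX P x' * margY P y)
    (hx : 0 < margX P x) (hy : 0 < margY P y) (hattain : P x y = c * margX P x * margY P y) :
    pml P y = Real.log c := by
  have hS : ⨆ x', condYX P x' y = c * margY P y := by
    refine le_antisymm (iSup_condYX_le hP hc hbound) ?_
    refine le_ciSup_of_le (Finite.bddAbove_range _) x (le_of_eq ?_)
    rw [condYX, hattain]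
    field_simp
  rw [pml, hS, mul_div_cancel_right₀ _ hy.ne']

variable {Q : X → Y → ℝ} {t δ : ℝ}

theorem ubarEps_le_of_pml_le (hQ : IsJoint Q) (ht : 0 ≤ t) (hδ : 0 ≤ δ)
    (hpml : ∀ y, pml Q y ≤ t) : ubarEps Q δ ≤ t := by
  refine csInf_le ⟨0, fun s hs => hs.1⟩ ⟨ht, ?_⟩
  rw [filter_true_of_mem fun y _ => hpml y, hQ.sum_margY]
  linarith

theorem ubarEps_eq_of_pml_eq (hQ : IsJoint Q) (ht : 0 ≤ t) (hδ : δ ∈ Set.Ioo 0 1)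
    (hpml : ∀ y, pml Q y = t) : ubarEps Q δ = t := by
  refine le_antisymm (ubarEps_le_of_pml_le hQ ht hδ.1.le fun y => (hpml y).le) ?_
  refine le_csInf ⟨t, ht, ?_⟩ fun s ⟨_, hs⟩ => ?_
  · rw [filter_true_of_mem fun y _ => (hpml y).le, hQ.sum_margY]
    linarith [hδ.1]
  · by_contra! hst
    rw [filter_false_of_mem fun y _ => by rw [hpml y]; exact not_le.mpr hst, sum_empty] at hs
    linarith [hδ.2]

theorem pmlEnvelope_eq_of_pml_eq (hP : IsJoint P) {ε : ℝ} (hε : 0 ≤ ε)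
    (hbound : ∀ x y, P x y ≤ Real.exp ε * margX P x * margY P y) (hpml : ∀ y, pml P y = ε)
    (hδ : δ ∈ Set.Ioo 0 1) : pmlEnvelope P δ = ε := by
  refine IsGreatest.csSup_eq ⟨?_, ?_⟩
  · let e := Fintype.equivFin Y
    refine ⟨Fintype.card Y, _, isKernel_equiv e, (ubarEps_eq_of_pml_eq ?_ hε hδ ?_).symm⟩
    · exact isJoint_pushKernel hP (isKernel_equiv e)
    · intro z
      rw [pushKernel_equiv, pml_comp_equiv_symm, hpml]
  · rintro _ ⟨n, K, hK, rfl⟩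
    refine ubarEps_le_of_pml_le (isJoint_pushKernel hP hK) hε hδ.1.le fun z => ?_
    have hQ := (isJoint_pushKernel hP hK).1
    calc pml (pushKernel P K) z ≤ Real.log (Real.exp ε) :=
          pml_le_log_of_le_mul_marg hQ (Real.one_le_exp hε)
            fun x => pushKernel_le_mul_marg hK hbound x z
      _ = ε := Real.log_exp ε

end Leakage

theorem exp_mul_one_sub_le_one_of_lt_neg_log {ι : Type} [Finite ι] {p : ι → ℝ} {ε : ℝ}
    (hεhi : ε < -Real.log (1 - ⨅ i, p i)) (i : ι) : Real.exp ε * (1 - p i) ≤ 1 := by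
  have hmin : 1 - p i ≤ 1 - ⨅ i, p i := by linarith [ciInf_le (Finite.bddBelow_range p) i]
  rcases le_or_gt (1 - ⨅ i, p i) 0 with hnonpos | hpos
  · nlinarith [Real.exp_pos ε]
  · have hlt : 1 - ⨅ i, p i < Real.exp (-ε) := by
      rw [← Real.exp_log hpos]
      exact Real.exp_lt_exp.mpr (by linarith)
    calc Real.exp ε * (1 - p i) ≤ Real.exp ε * Real.exp (-ε) := by gcongr; linarith
      _ = 1 := by rw [← Real.exp_add, add_neg_cancel, Real.exp_zero]

section ExtremalMechanism

variable {ι : Type} [DecidableEq ι] {p : ι → ℝ} {ε : ℝ}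

/-- The PML-extremal mechanism `P*_{Y|X}`, with `p = P_X`. -/
def pmlExtremalMechanism (p : ι → ℝ) (ε : ℝ) (i j : ι) : ℝ :=
  if i = j then 1 - Real.exp ε * (1 - p i) else Real.exp ε * p j

def pmlExtremalJoint (p : ι → ℝ) (ε : ℝ) (i j : ι) : ℝ :=
  p i * pmlExtremalMechanism p ε i j

theorem sum_pmlExtremalMechanism [Fintype ι] (hpsum : ∑ i, p i = 1) (i : ι) :
    ∑ j, pmlExtremalMechanism p ε i j = 1 := by
  unfold pmlExtremalMechanism
  rw [← add_sum_erase _ _ (mem_univ i), if_pos rfl,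
    sum_congr rfl fun j hj => if_neg (ne_of_mem_erase hj).symm, ← mul_sum,
    sum_erase_eq_sub (mem_univ i), hpsum]
  ring

theorem pmlExtremalJoint_comm (i j : ι) :
    pmlExtremalJoint p ε i j = pmlExtremalJoint p ε j i := by
  unfold pmlExtremalJoint pmlExtremalMechanism
  split_ifs with hij hji hji
  · rw [hij]
  · exact absurd hij.symm hji
  · exact absurd hji.symm hij
  · ring

theorem pmlExtremalMechanism_le (hε : 0 ≤ ε) (i j : ι) :
    pmlExtremalMechanism p ε i j ≤ Real.exp ε * p j := by
  unfold pmlExtremalMechanism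
  split_ifs with hij
  · subst hij
    linarith [Real.one_le_exp hε]
  · rfl

theorem margX_pmlExtremalJoint [Fintype ι] (hpsum : ∑ i, p i = 1) (i : ι) :
    margX (pmlExtremalJoint p ε) i = p i := by
  simp only [margX, pmlExtremalJoint]
  rw [← mul_sum, sum_pmlExtremalMechanism hpsum, mul_one]

theorem margY_pmlExtremalJoint [Fintype ι] (hpsum : ∑ i, p i = 1) (j : ι) :
    margY (pmlExtremalJoint p ε) j = p j := by
  rw [margY, sum_congr rfl fun i _ => pmlExtremalJoint_comm i j]
  exact margX_pmlExtremalJoint hpsum j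

theorem isJoint_pmlExtremalJoint [Fintype ι] (hp : ∀ i, 0 ≤ p i) (hpsum : ∑ i, p i = 1)
    (hdiag : ∀ i, Real.exp ε * (1 - p i) ≤ 1) : IsJoint (pmlExtremalJoint p ε) := by
  refine ⟨fun i j => mul_nonneg (hp i) ?_, ?_⟩
  · unfold pmlExtremalMechanism
    split_ifs
    · linarith [hdiag i]
    · exact mul_nonneg (Real.exp_pos ε).le (hp j)
  · exact (sum_congr rfl fun i _ => margX_pmlExtremalJoint hpsum i).trans hpsum

theorem pmlExtremalJoint_le_mul_marg [Fintype ι] (hp : ∀ i, 0 ≤ p i) (hpsum : ∑ i, p i = 1)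
    (hε : 0 ≤ ε) (i j : ι) :
    pmlExtremalJoint p ε i j ≤
      Real.exp ε * margX (pmlExtremalJoint p ε) i * margY (pmlExtremalJoint p ε) j := by
  rw [margX_pmlExtremalJoint hpsum, margY_pmlExtremalJoint hpsum, mul_comm _ (p i), mul_assoc]
  exact mul_le_mul_of_nonneg_left (pmlExtremalMechanism_le hε i j) (hp i)

/-- The maximum defining `ℓ(X → j)` is attained at any `i ≠ j`. -/
theorem pml_pmlExtremalJoint [Fintype ι] [Nontrivial ι] (hp : ∀ i, 0 < p i)
    (hpsum : ∑ i, p i = 1) (hdiag : ∀ i, Real.exp ε * (1 - p i) ≤ 1) (hε : 0 ≤ ε)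
    (j : ι) : pml (pmlExtremalJoint p ε) j = ε := by
  obtain ⟨i, hij⟩ := exists_ne j
  have hbound := pmlExtremalJoint_le_mul_marg (fun i => (hp i).le) hpsum hε
  have hjoint := isJoint_pmlExtremalJoint (fun i => (hp i).le) hpsum hdiag
  refine (pml_eq_log_of_le_mul_marg hjoint.1 (Real.exp_pos ε).le (x := i) (fun i => hbound i j)
    ?_ ?_ ?_).trans (Real.log_exp ε)
  · rw [margX_pmlExtremalJoint hpsum]
    exact hp i
  · rw [margY_pmlExtremalJoint hpsum]
    exact hp j
  · rw [margX_pmlExtremalJoint hpsum, margY_pmlExtremalJoint hpsum, pmlExtremalJoint,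
      pmlExtremalMechanism, if_neg hij]
    ring

end ExtremalMechanism

/-- Let `P_X` be a distribution on `{1,…,k}` (here `Fin k`) with `k ≥ 2`
and positive probabilities, and fix `ε` in the high-privacy regime
`0 < ε < -log (1 - min_i P_X(i))`. For the PML-extremal mechanism
`P*_{Y|X=i}(j) = 1 - e^ε (1 - P_X(i))` if `i = j` and `e^ε P_X(j)` otherwise,
the PML envelope of the induced joint distribution satisfies `ε_c(δ) = ε`
for all `δ ∈ (0,1)`. -/
theorem pmlEnvelope_extremal_mechanism
    (k : ℕ) (hk : 2 ≤ k) (p : Fin k → ℝ)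
    (hp : ∀ i, 0 < p i) (hpsum : ∑ i, p i = 1)
    (ε : ℝ) (hε : 0 < ε) (hεhi : ε < -Real.log (1 - ⨅ i, p i)) :
    ∀ δ ∈ Set.Ioo (0 : ℝ) 1,
      pmlEnvelope
        (fun i j : Fin k =>
          p i * (if i = j then 1 - Real.exp ε * (1 - p i) else Real.exp ε * p j)) δ
        = ε := by
  intro δ hδ
  have : Nontrivial (Fin k) := Fin.nontrivial_iff_two_le.mpr hk
  have hdiag := exp_mul_one_sub_le_one_of_lt_neg_log hεhi
  have hp_nonneg : ∀ i, 0 ≤ p i := fun i => (hp i).le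
  show pmlEnvelope (pmlExtremalJoint p ε) δ = ε
  exact pmlEnvelope_eq_of_pml_eq (isJoint_pmlExtremalJoint hp_nonneg hpsum hdiag) hε.le
    (pmlExtremalJoint_le_mul_marg hp_nonneg hpsum hε.le)
    (pml_pmlExtremalJoint hp hpsum hdiag hε.le) hδ
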